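/- Let $W=\{(W_i,\omega_i)\}_{i\in I}$ be a fusion frame with synthesis operator $T_W$. Then the following are equivalent: (1) every $f\in\mathcal{H}$ has a unique representation $f=\sum_{i\in I}f_i$ with $f_i\in W_i$ (Riesz decomposition); (2) $T_W$ is injective; (3) $T_W^*$ is surjective; (4) $W$ is a fusion Riesz basis. -/

import Mathlib

/-
The lower frame bound says that the analysis operator `T†` is bounded below. Then so is
`T T†`, whose quadratic form is `‖T† f‖²`; having closed range and trivial kernel, it is onto,
so `T` is surjective. Hence `T` is injective iff it is a Banach isomorphism, iff `T†` is onto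
(`ker T = (range T†)ᗮ`). The two-sided bounds `‖g‖ ≲ ‖T g‖ ≲ ‖g‖` of an isomorphism, restricted
to finitely supported `g`, are the fusion Riesz inequalities. Conversely, the lower Riesz
inequality, applied to partial sums, forces every convergent decomposition of `0` into pieces
of the `W i` to vanish termwise, so decompositions are unique; uniqueness for `(ω i • g i)`
is injectivity of `T`.
-/
open scoped InnerProductSpace
open ContinuousLinearMap (adjoint)
set_option maxHeartbeats 1000000
set_option synthInstance.maxHeartbeats 400000
noncomputable section

variable {H : Type*} [NormedAddCommGroup H] [InnerProductSpace ℂ H] [CompleteSpace H]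
variable {ι : Type*} [Countable ι]

/-- The orthogonal projection onto a closed subspace, as an endomorphism of `H`. -/
noncomputable def projL (W : Submodule ℂ H) [CompleteSpace W] : H →L[ℂ] H :=
  W.subtypeL.comp W.orthogonalProjection

/-- `{(W i, ω i)}` is a fusion frame with bounds `A ≤ B`. -/
def IsFusionFrame (W : ι → Submodule ℂ H) [∀ i, CompleteSpace (W i)]
    (ω : ι → ℝ) (A B : ℝ) : Prop :=
  ∀ f : H, ∃ s : ℝ,
    HasSum (fun i => (ω i) ^ 2 * ‖((W i).orthogonalProjection f : H)‖ ^ 2) s ∧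
    A * ‖f‖ ^ 2 ≤ s ∧ s ≤ B * ‖f‖ ^ 2

/-- `{(W i, ω i)}` is a Bessel fusion sequence with bound `B`. -/
def IsBesselFusion (W : ι → Submodule ℂ H) [∀ i, CompleteSpace (W i)]
    (ω : ι → ℝ) (B : ℝ) : Prop :=
  ∀ f : H, ∃ s : ℝ,
    HasSum (fun i => (ω i) ^ 2 * ‖((W i).orthogonalProjection f : H)‖ ^ 2) s ∧
    s ≤ B * ‖f‖ ^ 2

/-- `{(W i, ω i)}` is a fusion Riesz basis with bounds `C ≤ D`. -/
def IsFusionRieszBasisWith (W : ι → Submodule ℂ H) (ω : ι → ℝ) (C D : ℝ) : Prop :=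
  (⨆ i, W i).topologicalClosure = ⊤ ∧ 0 < C ∧ C ≤ D ∧
  ∀ (J : Finset ι) (g : ∀ i, W i),
    C * ∑ j ∈ J, ‖(g j : H)‖ ^ 2 ≤ ‖∑ j ∈ J, ω j • ((g j : H))‖ ^ 2 ∧
    ‖∑ j ∈ J, ω j • ((g j : H))‖ ^ 2 ≤ D * ∑ j ∈ J, ‖(g j : H)‖ ^ 2

/-- `{(W i, ω i)}` is a fusion Riesz basis. -/
def IsFusionRieszBasis (W : ι → Submodule ℂ H) (ω : ι → ℝ) : Prop :=
  ∃ C D : ℝ, IsFusionRieszBasisWith W ω C D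

namespace ContinuousLinearMap

variable {𝕜 E F : Type*} [RCLike 𝕜] [NormedAddCommGroup E] [InnerProductSpace 𝕜 E]
  [CompleteSpace E] [NormedAddCommGroup F] [InnerProductSpace 𝕜 F] [CompleteSpace F]

theorem surjective_of_antilipschitz_adjoint {T : E →L[𝕜] F} {K : NNReal}
    (hK : AntilipschitzWith K (adjoint T)) : Function.Surjective T := by
  set S := T ∘L adjoint T with hS_def
  have hS : AntilipschitzWith (K ^ 2) S := by
    refine S.antilipschitz_of_bound fun y => ?_
    have hy : ‖y‖ ≤ K * ‖adjoint T y‖ := ZeroHomClass.bound_of_antilipschitz _ hK y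
    have hquad : ‖adjoint T y‖ ^ 2 ≤ ‖S y‖ * ‖y‖ := by
      rw [apply_norm_sq_eq_inner_adjoint_left, adjoint_adjoint]
      exact (RCLike.re_le_norm _).trans (norm_inner_le_norm _ _)
    have h : ‖y‖ * ‖y‖ ≤ (K ^ 2 * ‖S y‖) * ‖y‖ := calc
      ‖y‖ * ‖y‖ ≤ (K * ‖adjoint T y‖) * (K * ‖adjoint T y‖) :=
        mul_self_le_mul_self (norm_nonneg y) hy
      _ = K ^ 2 * ‖adjoint T y‖ ^ 2 := by ring
      _ ≤ K ^ 2 * (‖S y‖ * ‖y‖) := by gcongr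
      _ = (K ^ 2 * ‖S y‖) * ‖y‖ := by ring
    rcases (norm_nonneg y).eq_or_lt with hy0 | hy0
    · rw [← hy0]
      positivity
    · push_cast
      exact le_of_mul_le_mul_right h hy0
  have hclosed : IsClosed (S.range : Set F) := hS.isClosed_range S.uniformContinuous
  have : CompleteSpace S.range := hclosed.completeSpace_coe
  have hker : S.ker = ⊥ := by
    rw [hS_def, ker_self_comp_adjoint, LinearMap.ker_eq_bot]
    exact hK.injective
  have hrange : S.range = ⊤ := by
    rw [← Submodule.orthogonal_eq_bot_iff, orthogonal_range, hS_def, adjoint_comp,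
      adjoint_adjoint]
    exact hker
  intro f
  obtain ⟨y, hy⟩ := LinearMap.range_eq_top.mp hrange f
  exact ⟨adjoint T y, hy⟩

theorem injective_of_surjective_adjoint {T : E →L[𝕜] F}
    (hT : Function.Surjective (adjoint T)) : Function.Injective T := by
  rw [← coe_coe, ← LinearMap.ker_eq_bot, ← adjoint_adjoint T, ← orthogonal_range,
    LinearMap.range_eq_top.mpr hT, Submodule.top_orthogonal_eq_bot]

theorem surjective_adjoint_of_bijective {T : E →L[𝕜] F} (hT : Function.Bijective T) :
    Function.Surjective (adjoint T) := by
  apply surjective_of_antilipschitz_adjoint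
  rw [adjoint_adjoint]
  exact (ContinuousLinearEquiv.ofBijective T (LinearMap.ker_eq_bot.mpr hT.1)
    (LinearMap.range_eq_top.mpr hT.2)).antilipschitz

end ContinuousLinearMap

namespace lp

variable {α : Type*} {E : α → Type*} [∀ i, NormedAddCommGroup (E i)]

theorem hasSum_norm_sq (f : lp E 2) : HasSum (fun i => ‖f i‖ ^ 2) (‖f‖ ^ 2) := by
  simpa using lp.hasSum_norm (p := 2) (by norm_num) f

theorem norm_sum_single_sq [DecidableEq α] (f : ∀ i, E i) (s : Finset α) :
    ‖∑ i ∈ s, lp.single 2 i (f i)‖ ^ 2 = ∑ i ∈ s, ‖f i‖ ^ 2 := by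
  simpa using lp.norm_sum_single (p := 2) (by norm_num) f s

end lp

section Synthesis

omit [Countable ι] [CompleteSpace H]

def IsSynthesisOperator (W : ι → Submodule ℂ H) (ω : ι → ℝ)
    (T : lp (fun i => W i) 2 →L[ℂ] H) : Prop :=
  ∀ f, HasSum (fun i => ω i • ((f i : H))) (T f)

variable {W : ι → Submodule ℂ H} {ω : ι → ℝ} {T : lp (fun i => W i) 2 →L[ℂ] H}

theorem hasSum_synthesis_components (hT : IsSynthesisOperator W ω T)
    (x : lp (fun i => W i) 2) : HasSum (fun i => (((ω i : ℂ) • x i : W i) : H)) (T x) := by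
  simpa only [Complex.coe_smul, Submodule.coe_smul_of_tower] using hT x

theorem synthesis_single [DecidableEq ι]
    (hT : IsSynthesisOperator W ω T) (i : ι) (x : W i) :
    T (lp.single 2 i x) = ω i • (x : H) := by
  have h := hasSum_single (f := fun j => ω j • ((lp.single (E := fun j => W j) 2 i x j : W j) : H))
    i fun j hj => by simp [Pi.single_eq_of_ne hj]
  rw [lp.single_apply_self] at h
  exact (hT _).unique h

theorem synthesis_sum_single [DecidableEq ι]
    (hT : IsSynthesisOperator W ω T) (J : Finset ι) (g : ∀ i, W i) :
    T (∑ j ∈ J, lp.single 2 j (g j)) = ∑ j ∈ J, ω j • (g j : H) := by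
  simp only [map_sum, synthesis_single hT]

theorem injective_of_existsUnique_hasSum
    (hT : IsSynthesisOperator W ω T) (hω : ∀ i, ω i ≠ 0)
    (huniq : ∀ f : H, ∃! g : ∀ i, W i, HasSum (fun i => (g i : H)) f) :
    Function.Injective T := by
  refine (injective_iff_map_eq_zero T).mpr fun x hx => lp.ext (funext fun i => ?_)
  have hcomp : (fun i => ((ω i : ℂ) • x i : W i)) = 0 :=
    (huniq 0).unique (hx ▸ hasSum_synthesis_components hT x) (by simp)
  exact (smul_eq_zero.mp (congrFun hcomp i)).resolve_left (by exact_mod_cast hω i)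

theorem topologicalClosure_iSup_eq_top_of_surjective
    (hT : IsSynthesisOperator W ω T) (hsurj : Function.Surjective T) :
    (⨆ i, W i).topologicalClosure = ⊤ := by
  refine Submodule.eq_top_iff'.mpr fun f => ?_
  obtain ⟨x, rfl⟩ := hsurj f
  refine mem_closure_of_tendsto (hasSum_synthesis_components hT x)
    (Filter.Eventually.of_forall fun J => ?_)
  exact Submodule.sum_mem _ fun i _ => le_iSup W i (Submodule.coe_mem _)

theorem isFusionRieszBasis_of_antilipschitz
    (hT : IsSynthesisOperator W ω T) {K : NNReal}
    (hK : AntilipschitzWith K T) (hdense : (⨆ i, W i).topologicalClosure = ⊤) :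
    IsFusionRieszBasis W ω := by
  classical
  refine ⟨((K : ℝ) ^ 2 + 1)⁻¹, max ((K : ℝ) ^ 2 + 1)⁻¹ (‖T‖ ^ 2), hdense, by positivity,
    le_max_left _ _, fun J g => ?_⟩
  set x := ∑ j ∈ J, lp.single 2 j (g j)
  have hx : ‖x‖ ^ 2 = ∑ j ∈ J, ‖(g j : H)‖ ^ 2 := lp.norm_sum_single_sq g J
  rw [← synthesis_sum_single hT, ← hx]
  constructor
  · have hbelow : ‖x‖ ≤ K * ‖T x‖ := ZeroHomClass.bound_of_antilipschitz T hK x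
    rw [inv_mul_le_iff₀ (by positivity)]
    nlinarith [norm_nonneg x, norm_nonneg (T x), K.coe_nonneg]
  · calc ‖T x‖ ^ 2 ≤ (‖T‖ * ‖x‖) ^ 2 := by gcongr; exact T.le_opNorm x
      _ = ‖T‖ ^ 2 * ‖x‖ ^ 2 := mul_pow _ _ _
      _ ≤ _ := by gcongr; exact le_max_right _ _

theorem eq_zero_of_hasSum_eq_zero (hW : IsFusionRieszBasis W ω) (hω : ∀ i, ω i ≠ 0)
    {g : ∀ i, W i} (hg : HasSum (fun i => (g i : H)) 0) : g = 0 := by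
  obtain ⟨C, D, -, hC, -, hbound⟩ := hW
  set k : ∀ i, W i := fun i => (ω i)⁻¹ • g i
  have hk : ∀ i, ω i • (k i : H) = g i := fun i => by
    simp only [k, Submodule.coe_smul_of_tower, smul_inv_smul₀ (hω i)]
  funext j
  have hlim : Filter.Tendsto (fun J : Finset ι => ‖∑ i ∈ J, (g i : H)‖ ^ 2) Filter.atTop
      (nhds 0) := by
    simpa using (hg.norm.pow 2)
  have hev : ∀ᶠ J : Finset ι in Filter.atTop,
      C * ‖(k j : H)‖ ^ 2 ≤ ‖∑ i ∈ J, (g i : H)‖ ^ 2 := by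
    filter_upwards [Filter.eventually_ge_atTop {j}] with J hJ
    calc C * ‖(k j : H)‖ ^ 2 ≤ C * ∑ i ∈ J, ‖(k i : H)‖ ^ 2 := by
          gcongr
          exact Finset.single_le_sum (f := fun i => ‖(k i : H)‖ ^ 2) (fun i _ => by positivity)
            (Finset.singleton_subset_iff.mp hJ)
      _ ≤ ‖∑ i ∈ J, ω i • (k i : H)‖ ^ 2 := (hbound J k).1
      _ = ‖∑ i ∈ J, (g i : H)‖ ^ 2 := by simp only [hk]
  have hkj : k j = 0 := by
    have hsq : ‖(k j : H)‖ ^ 2 ≤ 0 := nonpos_of_mul_nonpos_right (ge_of_tendsto hlim hev) hC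
    exact Subtype.ext (norm_eq_zero.mp (pow_eq_zero_iff two_ne_zero |>.mp
      (le_antisymm hsq (sq_nonneg _))))
  rw [← Subtype.coe_inj, ← hk j, hkj]
  simp

theorem existsUnique_hasSum_of_isFusionRieszBasis
    (hT : IsSynthesisOperator W ω T) (hsurj : Function.Surjective T)
    (hω : ∀ i, ω i ≠ 0) (hW : IsFusionRieszBasis W ω) (f : H) :
    ∃! g : ∀ i, W i, HasSum (fun i => (g i : H)) f := by
  obtain ⟨x, rfl⟩ := hsurj f
  refine ⟨_, hasSum_synthesis_components hT x, fun g hg => sub_eq_zero.mp ?_⟩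
  refine eq_zero_of_hasSum_eq_zero hW hω ?_
  simpa using hg.sub (hasSum_synthesis_components hT x)

end Synthesis

section Analysis

omit [Countable ι]

variable {W : ι → Submodule ℂ H} [∀ i, CompleteSpace (W i)] {ω : ι → ℝ}
  {T : lp (fun i => W i) 2 →L[ℂ] H}

theorem adjoint_synthesis_apply (hT : IsSynthesisOperator W ω T)
    (f : H) (i : ι) : adjoint T f i = (ω i : ℂ) • (W i).orthogonalProjectionOnto f := by
  classical
  refine ext_inner_right ℂ fun x => ?_
  rw [← lp.inner_single_right, ContinuousLinearMap.adjoint_inner_left, synthesis_single hT,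
    inner_smul_left, Complex.conj_ofReal, Submodule.inner_orthogonalProjectionOnto_eq_of_mem_right,
    ← Complex.coe_smul, inner_smul_right]

theorem hasSum_sq_norm_adjoint_synthesis
    (hT : IsSynthesisOperator W ω T) (f : H) :
    HasSum (fun i => ω i ^ 2 * ‖((W i).orthogonalProjectionOnto f : H)‖ ^ 2)
      (‖adjoint T f‖ ^ 2) := by
  convert lp.hasSum_norm_sq (adjoint T f) using 2 with i
  rw [adjoint_synthesis_apply hT, norm_smul, Complex.norm_real, Real.norm_eq_abs, mul_pow, sq_abs]
  rfl

theorem exists_antilipschitz_adjoint_synthesis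
    (hT : IsSynthesisOperator W ω T) {A B : ℝ} (hA : 0 < A)
    (hframe : IsFusionFrame W ω A B) : ∃ K, AntilipschitzWith K (adjoint T) := by
  refine ⟨(NNReal.sqrt A.toNNReal)⁻¹, (adjoint T).antilipschitz_of_bound fun f => ?_⟩
  obtain ⟨s, hs, hAs, -⟩ := hframe f
  have hsq : A * ‖f‖ ^ 2 ≤ ‖adjoint T f‖ ^ 2 :=
    (hasSum_sq_norm_adjoint_synthesis hT f).unique hs ▸ hAs
  have hsqrt : √A * ‖f‖ ≤ ‖adjoint T f‖ := by
    rw [← Real.sqrt_sq (norm_nonneg (adjoint T f)), ← Real.sqrt_sq (norm_nonneg f),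
      ← Real.sqrt_mul hA.le]
    exact Real.sqrt_le_sqrt hsq
  rw [NNReal.coe_inv, Real.coe_sqrt, Real.coe_toNNReal _ hA.le, inv_mul_eq_div,
    le_div_iff₀ (Real.sqrt_pos.mpr hA), mul_comm]
  exact hsqrt

theorem synthesis_surjective (hT : IsSynthesisOperator W ω T) {A B : ℝ}
    (hA : 0 < A) (hframe : IsFusionFrame W ω A B) : Function.Surjective T :=
  let ⟨_, hK⟩ := exists_antilipschitz_adjoint_synthesis hT hA hframe
  ContinuousLinearMap.surjective_of_antilipschitz_adjoint hK

theorem isFusionRieszBasis_of_bijective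
    (hT : IsSynthesisOperator W ω T) (hbij : Function.Bijective T) :
    IsFusionRieszBasis W ω :=
  isFusionRieszBasis_of_antilipschitz hT (ContinuousLinearEquiv.ofBijective T
    (LinearMap.ker_eq_bot.mpr hbij.1) (LinearMap.range_eq_top.mpr hbij.2)).antilipschitz
    (topologicalClosure_iSup_eq_top_of_surjective hT hbij.2)

end Analysis

theorem stmt4_general (W : ι → Submodule ℂ H) [∀ i, CompleteSpace (W i)]
    (ω : ι → ℝ) (hω : ∀ i, 0 < ω i) (A B : ℝ) (hA : 0 < A)
    (hframe : IsFusionFrame W ω A B)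
    (T : lp (fun i => ↥(W i)) 2 →L[ℂ] H)
    (hT : ∀ f, HasSum (fun i => ω i • ((f i : H))) (T f)) :
    ((∀ f : H, ∃! g : ∀ i, ↥(W i), HasSum (fun i => ((g i : H))) f) ↔
      Function.Injective T) ∧
    (Function.Injective T ↔ Function.Surjective (adjoint T)) ∧
    (Function.Surjective (adjoint T) ↔ IsFusionRieszBasis W ω) := by
  have hω₀ : ∀ i, ω i ≠ 0 := fun i => (hω i).ne'
  have hsurj : Function.Surjective T := synthesis_surjective hT hA hframe
  have h12 := injective_of_existsUnique_hasSum hT hω₀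
  have h23 : Function.Injective T → Function.Surjective (adjoint T) := fun hinj =>
    ContinuousLinearMap.surjective_adjoint_of_bijective ⟨hinj, hsurj⟩
  have h34 : Function.Surjective (adjoint T) → IsFusionRieszBasis W ω := fun hadj =>
    isFusionRieszBasis_of_bijective hT
      ⟨ContinuousLinearMap.injective_of_surjective_adjoint hadj, hsurj⟩
  have h41 := existsUnique_hasSum_of_isFusionRieszBasis hT hsurj hω₀
  exact ⟨⟨h12, h41 ∘ h34 ∘ h23⟩, ⟨h23, h12 ∘ h41 ∘ h34⟩, ⟨h34, h23 ∘ h12 ∘ h41⟩⟩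

/-- for a fusion frame `W` with synthesis operator `T_W`, the following are
equivalent: Riesz decomposition property, injectivity of `T_W`, surjectivity of `T_W^*`,
and the fusion Riesz basis property. -/
theorem stmt4 (W : ι → Submodule ℂ H) [∀ i, CompleteSpace (W i)]
    (ω : ι → ℝ) (hω : ∀ i, 0 < ω i) (A B : ℝ) (hA : 0 < A) (hAB : A ≤ B)
    (hframe : IsFusionFrame W ω A B)
    (T : lp (fun i => ↥(W i)) 2 →L[ℂ] H)
    (hT : ∀ f, HasSum (fun i => ω i • ((f i : H))) (T f)) :
    ((∀ f : H, ∃! g : ∀ i, ↥(W i), HasSum (fun i => ((g i : H))) f) ↔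
      Function.Injective T) ∧
    (Function.Injective T ↔ Function.Surjective (adjoint T)) ∧
    (Function.Surjective (adjoint T) ↔ IsFusionRieszBasis W ω) :=
  stmt4_general W ω hω A B hA hframe T hT
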